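/- arXiv:1803.09110 — 6 statements merged into one kernel-verified Lean document; each statement's English description precedes it below -/
import Mathlib

section
/- Let a_{j,k} ∈ ℂ (1 ≤ j < k ≤ n+1) and let F = F(a) be the associated filtration of V = ℂ^{n+1}. Then N_1 satisfies Griffiths transversality with respect to F if and only if a_{k,n} = 0 for all 1 ≤ k ≤ n−1. -/
open Complex

noncomputable section

/-- The nilpotent endomorphism `N₀` (as a matrix, with 0-based indices:
Lean index `j` corresponds to the paper's index `j+1`):
`N₀ e_j = e_{j-1}` for `1 ≤ j ≤ n-1` (paper: `2 ≤ j ≤ n`), `N₀ e_0 = N₀ e_n = 0`. -/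
def N0 (n : ℕ) : Matrix (Fin (n + 1)) (Fin (n + 1)) ℂ :=
  fun i j => if (i : ℕ) + 1 = (j : ℕ) ∧ (j : ℕ) < n then 1 else 0

/-- The vector `w_k = e_k + ∑_{j<k} a_{j,k} e_j`, where `a` uses the paper's
1-based indices (so `a (i+1) (k+1)` for Lean indices `i < k`). -/
def w (n : ℕ) (a : ℕ → ℕ → ℂ) (k : Fin (n + 1)) : Fin (n + 1) → ℂ :=
  fun i => if i = k then 1 else if (i : ℕ) < (k : ℕ) then a ((i : ℕ) + 1) ((k : ℕ) + 1) else 0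

/-- The decreasing filtration `F = F(a)`: `F^p = 0` for `p ≥ 1`, and for `p ≤ 0`,
`F^p` is spanned by the `w_k` with (paper) `n+1+p ≤ k ≤ n+1`. -/
def Filt (n : ℕ) (a : ℕ → ℕ → ℂ) : ℤ → Submodule ℂ (Fin (n + 1) → ℂ) :=
  fun p => if 1 ≤ p then ⊥
    else Submodule.span ℂ {v | ∃ k : Fin (n + 1), (n : ℤ) + p ≤ (k : ℕ) ∧ v = w n a k}

/-- `N` satisfies Griffiths transversality with respect to `F(a)`: `N F^p ⊆ F^{p-1}`. -/
def GriffithsTransversal (n : ℕ) (N : Matrix (Fin (n + 1)) (Fin (n + 1)) ℂ)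
    (a : ℕ → ℕ → ℂ) : Prop :=
  ∀ p : ℤ, ∀ v ∈ Filt n a p, N.mulVec v ∈ Filt n a (p - 1)


/-- The nilpotent endomorphism `N₁` (0-based indices): `N₁ e_n = -e_{n-1}`
(paper: `N₁ e_{n+1} = -e_n`), and `N₁ e_j = 0` otherwise. -/
def N1 (n : ℕ) : Matrix (Fin (n + 1)) (Fin (n + 1)) ℂ :=
  fun i j => if (i : ℕ) + 1 = n ∧ (j : ℕ) = n then -1 else 0

lemma w_apply (n : ℕ) (a : ℕ → ℕ → ℂ) (k i : Fin (n+1)) :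
    w n a k i = if (i:ℕ) = (k:ℕ) then 1 else if (i:ℕ) < (k:ℕ) then a ((i:ℕ)+1) ((k:ℕ)+1) else 0 := by
  simp [w, Fin.ext_iff]

lemma N1_mulVec (n : ℕ) (v : Fin (n+1) → ℂ) :
    (N1 n).mulVec v = fun i : Fin (n+1) => if (i:ℕ)+1 = n then -(v (Fin.last n)) else 0 := by
  funext i
  simp only [Matrix.mulVec, dotProduct, N1]
  rw [Finset.sum_eq_single (Fin.last n)]
  · by_cases h : (i:ℕ)+1 = n <;> simp [h, Fin.last]
  · intro j _ hj
    have : ¬((j:ℕ) = n) := by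
      intro h; exact hj (Fin.ext (by simpa [Fin.last] using h))
    simp [this]
  · simp

/-- `(N₁, F)` satisfies Griffiths transversality iff `a_{k,n} = 0` for `1 ≤ k ≤ n-1`. -/
theorem griffiths_transversality_N1_iff (n : ℕ) (hn : 1 ≤ n) (a : ℕ → ℕ → ℂ) :
    GriffithsTransversal n (N1 n) a ↔
      (∀ k : ℕ, 1 ≤ k → k + 1 ≤ n → a k n = 0) := by
  constructor
  · intro hGT k hk hkn
    set i1 : Fin (n+1) := ⟨k-1, by omega⟩ with hi1
    set i2 : Fin (n+1) := ⟨n-1, by omega⟩ with hi2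
    set i3 : Fin (n+1) := Fin.last n with hi3
    set L : (Fin (n+1) → ℂ) →ₗ[ℂ] ℂ :=
      (LinearMap.proj i1 : (Fin (n+1) → ℂ) →ₗ[ℂ] ℂ) - a k n • LinearMap.proj i2
        + (a k n * a n (n+1) - a k (n+1)) • LinearMap.proj i3 with hL
    have hLapp : ∀ v : Fin (n+1) → ℂ,
        L v = v i1 - a k n * v i2 + (a k n * a n (n+1) - a k (n+1)) * v i3 := by
      intro v
      simp [hL]
    have hwn : w n a i3 ∈ Filt n a 0 := by
      rw [Filt]
      norm_num
      exact Submodule.subset_span ⟨i3, by simp only [hi3, Fin.val_last]; omega, rfl⟩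
    have hmem := hGT 0 _ hwn
    have hsub : Filt n a (0-1) ≤ LinearMap.ker L := by
      rw [Filt, if_neg (by norm_num)]
      apply Submodule.span_le.2
      rintro _ ⟨j, hj, rfl⟩
      have hj' : (j:ℕ) = n - 1 ∨ (j:ℕ) = n := by omega
      simp only [SetLike.mem_coe, LinearMap.mem_ker, hLapp]
      rcases hj' with hj' | hj'
      · rw [w_apply, w_apply, w_apply]
        rw [if_neg (show ¬(i1:ℕ) = (j:ℕ) by simp only [hi1, Fin.val_mk]; omega),
          if_pos (show (i1:ℕ) < (j:ℕ) by simp only [hi1, Fin.val_mk]; omega),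
          if_pos (show (i2:ℕ) = (j:ℕ) by simp only [hi2, Fin.val_mk]; omega),
          if_neg (show ¬(i3:ℕ) = (j:ℕ) by simp only [hi3, Fin.val_last]; omega),
          if_neg (show ¬(i3:ℕ) < (j:ℕ) by simp only [hi3, Fin.val_last]; omega)]
        have e1 : (i1:ℕ) + 1 = k := by simp only [hi1, Fin.val_mk]; omega
        have e2 : (j:ℕ) + 1 = n := by omega
        rw [e1, e2]
        ring
      · rw [w_apply, w_apply, w_apply]
        rw [if_neg (show ¬(i1:ℕ) = (j:ℕ) by simp only [hi1, Fin.val_mk]; omega),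
          if_pos (show (i1:ℕ) < (j:ℕ) by simp only [hi1, Fin.val_mk]; omega),
          if_neg (show ¬(i2:ℕ) = (j:ℕ) by simp only [hi2, Fin.val_mk]; omega),
          if_pos (show (i2:ℕ) < (j:ℕ) by simp only [hi2, Fin.val_mk]; omega),
          if_pos (show (i3:ℕ) = (j:ℕ) by simp only [hi3, Fin.val_last]; omega)]
        have e1 : (i1:ℕ) + 1 = k := by simp only [hi1, Fin.val_mk]; omega
        have e2 : (i2:ℕ) + 1 = n := by simp only [hi2, Fin.val_mk]; omega
        have e3 : (j:ℕ) + 1 = n + 1 := by omega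
        rw [e1, e2, e3]
        ring
    have hL0 := hsub hmem
    rw [LinearMap.mem_ker, hLapp, N1_mulVec] at hL0
    have hw3 : w n a i3 (Fin.last n) = 1 := by rw [w_apply]; simp [hi3]
    simp only [hw3] at hL0
    rw [if_neg (show ¬(i1:ℕ)+1 = n by simp only [hi1, Fin.val_mk]; omega),
      if_pos (show (i2:ℕ)+1 = n by simp only [hi2, Fin.val_mk]; omega),
      if_neg (show ¬(i3:ℕ)+1 = n by simp only [hi3, Fin.val_last]; omega)] at hL0
    have : a k n * -(1:ℂ) = 0 := by linear_combination -hL0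
    simpa using this
  · intro ha p v hv
    by_cases hp : 1 ≤ p
    · have hbot : Filt n a p = ⊥ := by simp [Filt, hp]
      rw [hbot, Submodule.mem_bot] at hv
      rw [hv, Matrix.mulVec_zero]
      exact Submodule.zero_mem _
    · have hp1 : ¬ (1:ℤ) ≤ p - 1 := by omega
      have key : ∀ j : Fin (n+1), (N1 n).mulVec (w n a j) ∈ Filt n a (p-1) := by
        intro j
        by_cases hjn : (j:ℕ) = n
        · have hw3 : w n a j (Fin.last n) = 1 := by rw [w_apply]; simp [Fin.last, hjn]
          have hw : (N1 n).mulVec (w n a j) = -(w n a ⟨n-1, by omega⟩) := by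
            rw [N1_mulVec]
            funext i
            rw [hw3]
            simp only [Pi.neg_apply]
            rw [w_apply]
            simp only
            rcases lt_trichotomy (i:ℕ) (n-1) with h | h | h
            · rw [if_neg (by omega), if_neg (by omega), if_pos (by omega)]
              have : a ((i:ℕ)+1) (n-1+1) = 0 := by
                have := ha ((i:ℕ)+1) (by omega) (by omega)
                rwa [show n-1+1 = n by omega]
              rw [this]; ring
            · rw [if_pos (by omega), if_pos (by omega)]
            · rw [if_neg (by omega), if_neg (by omega), if_neg (by omega)]
              ring
          rw [hw]
          apply Submodule.neg_mem
          rw [Filt, if_neg hp1]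
          exact Submodule.subset_span ⟨⟨n-1, by omega⟩, by simp only [Fin.val_mk]; omega, rfl⟩
        · have hw3 : w n a j (Fin.last n) = 0 := by
            rw [w_apply]; rw [if_neg (by simp [Fin.last]; omega), if_neg (by simp [Fin.last]; omega)]
          have hw : (N1 n).mulVec (w n a j) = 0 := by
            rw [N1_mulVec, hw3]
            funext i; simp
          rw [hw]
          exact Submodule.zero_mem _
      have hv' : v ∈ Submodule.span ℂ {v | ∃ k : Fin (n+1), (n:ℤ) + p ≤ (k:ℕ) ∧ v = w n a k} := by
        rwa [Filt, if_neg hp] at hv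
      have hsub : Submodule.span ℂ {v | ∃ k : Fin (n+1), (n:ℤ) + p ≤ (k:ℕ) ∧ v = w n a k}
          ≤ (Filt n a (p-1)).comap ((N1 n).mulVecLin) := by
        apply Submodule.span_le.2
        rintro _ ⟨j, hj, rfl⟩
        simpa [Submodule.mem_comap, Matrix.mulVecLin_apply] using key j
      have := hsub hv'
      simpa [Submodule.mem_comap, Matrix.mulVecLin_apply] using this
end
end

section
/- For every integer j with 1 ≤ j ≤ n+1, one has the operator identity (−N_0 + N_1)^j = (−N_0)^j + (−1)^{j−1} (ad N_0)^{j−1}(N_1), where (ad N_0)(M) := N_0 M − M N_0 and (ad N_0)^0(N_1) = N_1. -/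
open Complex

noncomputable section

/-- `ad N₀` acting on matrices: `(ad N₀)(M) = N₀ M - M N₀`. -/
def adN0 (n : ℕ) : Matrix (Fin (n + 1)) (Fin (n + 1)) ℂ → Matrix (Fin (n + 1)) (Fin (n + 1)) ℂ :=
  fun M => N0 n * M - M * N0 n

lemma N1_mul_N0 (n : ℕ) : N1 n * N0 n = 0 := by
  ext i j
  rw [Matrix.mul_apply]
  apply Finset.sum_eq_zero
  intro k _
  simp only [N1, N0, Matrix.zero_apply]
  split_ifs with h1 h2
  · omega
  · ring
  · ring
  · ring

lemma N1_mul_N1 (n : ℕ) : N1 n * N1 n = 0 := by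
  ext i j
  rw [Matrix.mul_apply]
  apply Finset.sum_eq_zero
  intro k _
  simp only [N1, Matrix.zero_apply]
  split_ifs with h1 h2
  · omega
  · ring
  · ring
  · ring

lemma adIter_mul_N0 (n : ℕ) : ∀ k, (adN0 n)^[k] (N1 n) * N0 n = 0 := by
  intro k
  induction k with
  | zero => simpa using N1_mul_N0 n
  | succ k ih =>
      rw [Function.iterate_succ_apply']
      simp only [adN0]
      rw [sub_mul, mul_assoc, ih, mul_zero]
      simp [ih]

lemma N1_mul_adIter (n : ℕ) : ∀ k, N1 n * (adN0 n)^[k] (N1 n) = 0 := by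
  intro k
  induction k with
  | zero => simpa using N1_mul_N1 n
  | succ k ih =>
      rw [Function.iterate_succ_apply']
      simp only [adN0]
      rw [mul_sub, ← mul_assoc, N1_mul_N0, zero_mul, ← mul_assoc, ih, zero_mul, sub_zero]

lemma key (n : ℕ) : ∀ k : ℕ,
    (-N0 n + N1 n) ^ (k + 1) =
      (-N0 n) ^ (k + 1) + ((-1 : ℂ) ^ k) • ((adN0 n)^[k] (N1 n)) := by
  intro k
  induction k with
  | zero => simp
  | succ k ih =>
      rw [pow_succ', ih, Function.iterate_succ_apply']
      have h1 : N1 n * (-N0 n) ^ (k + 1) = 0 := by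
        rw [pow_succ', ← mul_assoc]
        have : N1 n * -N0 n = 0 := by rw [mul_neg, N1_mul_N0, neg_zero]
        rw [this, zero_mul]
      have h2 : N1 n * (adN0 n)^[k] (N1 n) = 0 := N1_mul_adIter n k
      have h3 : (adN0 n)^[k] (N1 n) * N0 n = 0 := adIter_mul_N0 n k
      simp only [adN0, mul_add, add_mul, Matrix.mul_smul, h1, h2, h3, smul_zero,
        add_zero, zero_add, mul_sub, smul_sub, sub_zero]
      rw [← pow_succ', pow_succ (-1:ℂ) k, mul_comm ((-1:ℂ)^k) (-1:ℂ), ← smul_smul,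
        neg_one_smul, neg_mul, smul_neg]

/-- For `1 ≤ j ≤ n+1`: `(-N₀+N₁)^j = (-N₀)^j + (-1)^{j-1} (ad N₀)^{j-1}(N₁)`. -/
theorem pow_neg_N0_add_N1 (n : ℕ) (hn : 1 ≤ n) :
    ∀ j : ℕ, 1 ≤ j → j ≤ n + 1 →
      (-N0 n + N1 n) ^ j =
        (-N0 n) ^ j + ((-1 : ℂ) ^ (j - 1)) • ((adN0 n)^[j - 1] (N1 n)) := by
  intro j hj _
  obtain ⟨k, rfl⟩ := Nat.exists_eq_add_of_le hj
  simpa [Nat.add_comm 1 k] using key n k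
end
end

section
/- For every x ∈ U the matrix M(x) factorizes as M(x) = (I − Σ_{k=1}^{n} (2πi)^{−k} Li_k(x) E^{(k)}) · exp((2πi)^{−1} log(x) · N_0), where E^{(k)} is the matrix sending e_{n+1} to e_{n+1−k} and all other basis vectors to 0 and exp is the matrix exponential; moreover E^{(k)} = −(ad N_0)^{k−1}(N_1) for 1 ≤ k ≤ n, where (ad N_0)(M) := N_0 M − M N_0. -/
/-!
Since `N₀ ^ (n + 1) = 0`, the exponential `exp (t • N₀)` is a finite sum, with entries
`t ^ (j - i) / (j - i)!` on the first `n` coordinates and `1` at `(n, n)`. Each `E⁽ᵏ⁾` satisfies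
`E⁽ᵏ⁾ N₀ = 0`, hence `E⁽ᵏ⁾ exp (t • N₀) = E⁽ᵏ⁾`, so the right-hand side is `exp (t • N₀)` minus a
matrix supported on the last column, which is `M(x)` entry by entry. For the second claim,
`N₁ = -E⁽¹⁾` and `ad N₀ (E⁽ᵏ⁾) = N₀ E⁽ᵏ⁾ = E⁽ᵏ⁺¹⁾` for `1 ≤ k < n`.
-/

open Complex

noncomputable section

/-- The polylogarithm `Li_j(x) = ∑_{k≥1} x^k / k^j`, for `|x| < 1`. -/
def Li (j : ℕ) (x : ℂ) : ℂ := ∑' k : ℕ, x ^ (k + 1) / ((k : ℂ) + 1) ^ j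

/-- The slit open unit disc `U = {x : |x| < 1, x ∉ ℝ_{≤0}}`. -/
def U : Set ℂ := {x | ‖x‖ < 1 ∧ ¬(x.im = 0 ∧ x.re ≤ 0)}

/-- The matrix `M(x)` of solutions (0-based indices): diagonal entries `1`,
`M(x)_{i,j} = ((2πi)⁻¹ log x)^{j-i}/(j-i)!` for `i < j < n` (paper: `1 ≤ j < k ≤ n`),
`M(x)_{i,n} = -(2πi)^{-(n-i)} Li_{n-i}(x)` for `i < n` (paper: `M_{j,n+1}`, `1 ≤ j ≤ n`). -/
def Mmat (n : ℕ) (x : ℂ) : Matrix (Fin (n + 1)) (Fin (n + 1)) ℂ := fun i j =>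
  if i = j then 1
  else if (i : ℕ) < (j : ℕ) ∧ (j : ℕ) < n then
    ((2 * (Real.pi : ℂ) * I)⁻¹ * Complex.log x) ^ ((j : ℕ) - (i : ℕ)) / ((j : ℕ) - (i : ℕ)).factorial
  else if (i : ℕ) < (j : ℕ) ∧ (j : ℕ) = n then
    -((2 * (Real.pi : ℂ) * I)⁻¹) ^ (n - (i : ℕ)) * Li (n - (i : ℕ)) x
  else 0

/-- The matrix `E^{(k)}` sending `e_n` (paper: `e_{n+1}`) to `e_{n-k}` (paper: `e_{n+1-k}`)
and the other basis vectors to `0`. -/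
def Emat (n k : ℕ) : Matrix (Fin (n + 1)) (Fin (n + 1)) ℂ := fun i j =>
  if (i : ℕ) = n - k ∧ (j : ℕ) = n then 1 else 0


open Finset

section NilpotentExp

variable {𝔸 : Type*} [Ring 𝔸] [TopologicalSpace 𝔸] [IsTopologicalRing 𝔸]

theorem NormedSpace.exp_eq_sum_range_of_pow_eq_zero (𝕂 : Type*) [Field 𝕂] [CharZero 𝕂]
    [Algebra 𝕂 𝔸] {a : 𝔸} {m : ℕ} (h : a ^ m = 0) :
    NormedSpace.exp a = ∑ k ∈ range m, ((k.factorial : 𝕂)⁻¹) • a ^ k := by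
  rw [NormedSpace.exp_eq_tsum 𝕂]
  exact tsum_eq_sum fun k hk => by
    rw [pow_eq_zero_of_le (not_lt.1 (mem_range.not.1 hk)) h, smul_zero]

theorem mul_exp_eq_self_of_mul_eq_zero [Algebra ℚ 𝔸] {a b : 𝔸} (hb : IsNilpotent b)
    (hab : a * b = 0) : a * NormedSpace.exp b = a := by
  obtain ⟨m, hm⟩ := hb
  rw [NormedSpace.exp_eq_sum_range_of_pow_eq_zero ℚ (pow_eq_zero_of_le m.le_succ hm),
    mul_sum, sum_range_succ']
  simp [pow_succ', ← mul_assoc, hab]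

end NilpotentExp

theorem N0_pow_apply (n m : ℕ) (i j : Fin (n + 1)) :
    (N0 n ^ m) i j = if (i : ℕ) + m = j ∧ ((j : ℕ) < n ∨ m = 0) then 1 else 0 := by
  induction m generalizing j with
  | zero => simp [Matrix.one_apply, Fin.ext_iff]
  | succ m ih =>
    have hj := j.isLt
    rw [pow_succ, Matrix.mul_apply, Fintype.sum_eq_single ⟨(j : ℕ) - 1, by omega⟩]
    · simp only [ih, N0, mul_ite, mul_one, mul_zero, Nat.add_eq_zero_iff, one_ne_zero, and_false,
        or_false]
      split_ifs <;> first | rfl | omega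
    · intro l hl
      have hl' : (l : ℕ) ≠ (j : ℕ) - 1 := fun h => hl (Fin.ext h)
      simp only [N0, mul_ite, mul_one, mul_zero]
      split_ifs <;> first | rfl | omega

theorem N0_pow_succ_eq_zero (n : ℕ) : N0 n ^ (n + 1) = 0 := by
  ext i j
  rw [N0_pow_apply, Matrix.zero_apply, if_neg]
  omega

theorem smul_N0_pow_succ_eq_zero (n : ℕ) (t : ℂ) : (t • N0 n) ^ (n + 1) = 0 := by
  rw [smul_pow, N0_pow_succ_eq_zero, smul_zero]

theorem exp_smul_N0_apply (n : ℕ) (t : ℂ) (i j : Fin (n + 1)) :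
    NormedSpace.exp (t • N0 n) i j =
      if (i : ℕ) ≤ j ∧ ((j : ℕ) < n ∨ i = j) then
        t ^ ((j : ℕ) - i) / ((j : ℕ) - i).factorial else 0 := by
  rw [NormedSpace.exp_eq_sum_range_of_pow_eq_zero ℂ (smul_N0_pow_succ_eq_zero n t),
    Matrix.sum_apply, sum_eq_single ((j : ℕ) - i)]
  · simp only [smul_pow, Matrix.smul_apply, N0_pow_apply, smul_eq_mul, Fin.ext_iff]
    split_ifs <;> first | omega | simp [div_eq_inv_mul]
  · intro m _ hm
    simp only [smul_pow, Matrix.smul_apply, N0_pow_apply, smul_eq_mul]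
    rw [if_neg (by omega), mul_zero, mul_zero]
  · intro h
    exact absurd (mem_range.2 (by omega)) h

theorem Emat_mul_N0 (n k : ℕ) : Emat n k * N0 n = 0 := by
  ext i j
  rw [Matrix.mul_apply, Matrix.zero_apply]
  refine sum_eq_zero fun l _ => ?_
  simp only [Emat, N0, mul_ite, mul_one, mul_zero]
  split_ifs <;> first | rfl | omega

theorem N0_mul_Emat {n k : ℕ} (hk : 1 ≤ k) (hkn : k < n) :
    N0 n * Emat n k = Emat n (k + 1) := by
  ext i j
  have hi := i.isLt
  rw [Matrix.mul_apply, Fintype.sum_eq_single ⟨n - k, by omega⟩]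
  · simp only [N0, Emat, mul_ite, mul_one, mul_zero, true_and]
    split_ifs <;> first | rfl | omega
  · intro l hl
    have hl' : (l : ℕ) ≠ n - k := fun h => hl (Fin.ext h)
    simp only [N0, Emat, mul_ite, mul_one, mul_zero]
    split_ifs <;> first | rfl | omega

theorem sum_smul_Emat_apply (n : ℕ) (c : ℕ → ℂ) (i j : Fin (n + 1)) :
    (∑ k ∈ Icc 1 n, c k • Emat n k) i j = if (i : ℕ) < n ∧ (j : ℕ) = n then c (n - i) else 0 := by
  have hi := i.isLt
  have hcond : ∀ k ∈ Icc 1 n,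
      ((i : ℕ) = n - k ∧ (j : ℕ) = n) ↔ k = n - i ∧ (i : ℕ) < n ∧ (j : ℕ) = n :=
    fun k hk => by rw [mem_Icc] at hk; omega
  simp only [Matrix.sum_apply, Matrix.smul_apply, Emat, smul_eq_mul, mul_ite, mul_one, mul_zero]
  rw [sum_congr rfl fun k hk => if_congr (hcond k hk) rfl rfl]
  simp only [ite_and, sum_ite_eq', mem_Icc]
  split_ifs <;> first | rfl | omega

theorem Mmat_eq_exp_sub_sum (n : ℕ) (x : ℂ) :
    Mmat n x = NormedSpace.exp (((2 * (Real.pi : ℂ) * I)⁻¹ * Complex.log x) • N0 n) -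
      ∑ k ∈ Icc 1 n, (((2 * (Real.pi : ℂ) * I)⁻¹) ^ k * Li k x) • Emat n k := by
  ext i j
  rw [Matrix.sub_apply, exp_smul_N0_apply, sum_smul_Emat_apply, Mmat]
  have hi := i.isLt
  have hj := j.isLt
  split_ifs <;> first | omega | simp_all [Fin.ext_iff]

theorem sum_smul_Emat_mul_exp_smul_N0 (n : ℕ) (c : ℕ → ℂ) (t : ℂ) :
    (∑ k ∈ Icc 1 n, c k • Emat n k) * NormedSpace.exp (t • N0 n) =
      ∑ k ∈ Icc 1 n, c k • Emat n k := by
  refine mul_exp_eq_self_of_mul_eq_zero ⟨n + 1, smul_N0_pow_succ_eq_zero n t⟩ ?_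
  simp only [sum_mul, smul_mul_assoc, mul_smul_comm, Emat_mul_N0, smul_zero, sum_const_zero]

theorem Mmat_eq_mul_exp (n : ℕ) (x : ℂ) :
    Mmat n x =
      (1 - ∑ k ∈ Icc 1 n, (((2 * (Real.pi : ℂ) * I)⁻¹) ^ k * Li k x) • Emat n k) *
        NormedSpace.exp (((2 * (Real.pi : ℂ) * I)⁻¹ * Complex.log x) • N0 n) := by
  rw [sub_mul, one_mul, sum_smul_Emat_mul_exp_smul_N0, Mmat_eq_exp_sub_sum]

theorem N1_eq_neg_Emat_one {n : ℕ} (hn : 1 ≤ n) : N1 n = -Emat n 1 := by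
  ext i j
  simp only [N1, Emat, Matrix.neg_apply]
  split_ifs <;> first | rfl | omega | simp

theorem adN0_neg (n : ℕ) (A : Matrix (Fin (n + 1)) (Fin (n + 1)) ℂ) :
    adN0 n (-A) = -adN0 n A := by
  simp only [adN0, mul_neg, neg_mul, neg_sub, sub_neg_eq_add, neg_add_eq_sub]

theorem adN0_Emat {n k : ℕ} (hk : 1 ≤ k) (hkn : k < n) : adN0 n (Emat n k) = Emat n (k + 1) := by
  rw [adN0, N0_mul_Emat hk hkn, Emat_mul_N0, sub_zero]

theorem iterate_adN0_N1 {n m : ℕ} (hm : m < n) : (adN0 n)^[m] (N1 n) = -Emat n (m + 1) := by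
  induction m with
  | zero => exact N1_eq_neg_Emat_one hm
  | succ m ih =>
    rw [Function.iterate_succ_apply', ih (by omega), adN0_neg, adN0_Emat (by omega) hm]

theorem Mmat_factorization_general (n : ℕ) :
    (∀ x ∈ U, Mmat n x =
      (1 - ∑ k ∈ Finset.Icc 1 n, (((2 * (Real.pi : ℂ) * I)⁻¹) ^ k * Li k x) • Emat n k) *
        NormedSpace.exp (((2 * (Real.pi : ℂ) * I)⁻¹ * Complex.log x) • N0 n)) ∧
    (∀ k : ℕ, 1 ≤ k → k ≤ n → Emat n k = -((adN0 n)^[k - 1] (N1 n))) := by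
  refine ⟨fun x _ => Mmat_eq_mul_exp n x, fun k hk hkn => ?_⟩
  obtain ⟨m, rfl⟩ := Nat.exists_eq_add_of_le' hk
  rw [Nat.add_sub_cancel, iterate_adN0_N1 (by omega), neg_neg]

/-- For `x ∈ U`, `M(x) = (I - ∑_{k=1}^n (2πi)^{-k} Li_k(x) E^{(k)}) ⬝ exp((2πi)⁻¹ log(x) N₀)`;
moreover `E^{(k)} = -(ad N₀)^{k-1}(N₁)` for `1 ≤ k ≤ n`. -/
theorem Mmat_factorization (n : ℕ) (hn : 1 ≤ n) :
    (∀ x ∈ U, Mmat n x =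
      (1 - ∑ k ∈ Finset.Icc 1 n, (((2 * (Real.pi : ℂ) * I)⁻¹) ^ k * Li k x) • Emat n k) *
        NormedSpace.exp (((2 * (Real.pi : ℂ) * I)⁻¹ * Complex.log x) • N0 n)) ∧
    (∀ k : ℕ, 1 ≤ k → k ≤ n → Emat n k = -((adN0 n)^[k - 1] (N1 n))) :=
  Mmat_factorization_general n
end
end

section
/- For every integer N ≥ 1, the (N+1)-st term of the lower central series of Γ equals the subgroup {(0, p) : p ∈ (u−1)^N A} of Γ, i.e. Z^{N+1}(Γ) consists exactly of the pairs (0, p) with p ∈ ℤ[u,u^{−1}] divisible by (u−1)^N. -/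
open LaurentPolynomial

/-- The automorphism of (the multiplicative version of) the additive group
`A = ℤ[u,u⁻¹]` given by multiplication by `u` (i.e. by `T 1`). -/
noncomputable def sigma : MulAut (Multiplicative (LaurentPolynomial ℤ)) :=
  AddEquiv.toMultiplicative (AddAut.mulLeft (isUnit_T (R := ℤ) 1).unit)

/-- The action of `ℤ` on `A = ℤ[u,u⁻¹]`: `m` acts by multiplication by `u^m`. -/
noncomputable def phi : Multiplicative ℤ →* MulAut (Multiplicative (LaurentPolynomial ℤ)) :=
  zpowersHom _ sigma

/-- The semidirect product `Γ = ℤ ⋉ A`, where `m ∈ ℤ` acts on `A = ℤ[u,u⁻¹]` by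
multiplication by `u^m`. An element `(m, p)` is `⟨Multiplicative.ofAdd p, Multiplicative.ofAdd m⟩`. -/
abbrev Gamma := SemidirectProduct (Multiplicative (LaurentPolynomial ℤ)) (Multiplicative ℤ) phi

/-!
Every commutator in `R ⋊ ℤ` (with `m` acting by `uᵐ`) lies in `R`:
`⁅(m, a), (n, b)⁆ = (0, (1 - uⁿ) a + (uᵐ - 1) b)`. Since `u - 1` divides every `uᵐ - 1`,
commutators with an element `(0, (u - 1)ᴺ q)` land in `(u - 1)ᴺ⁺¹ R`, and conversely
`(0, (u - 1)ᴺ⁺¹ q) = ⁅(0, -(u - 1)ᴺ q), (1, 0)⁆`. Induction on `N` then identifies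
`Z^{N+1}` with `(u - 1)ᴺ R` for any unit `u` of a commutative ring `R`; `Γ` is the case
`R = ℤ[u, u⁻¹]`, `u = T 1`.
-/

open scoped commutatorElement

theorem SemidirectProduct.commutatorElement_right_eq_one {N G : Type*} [Group N] [CommGroup G]
    {φ : G →* MulAut N} (g h : N ⋊[φ] G) : ⁅g, h⁆.right = 1 := by
  simp [commutatorElement_def, mul_comm g.right]

variable {R : Type*} [CommRing R]

theorem Units.sub_one_dvd_one_sub_val_zpow (u : Rˣ) (m : ℤ) :
    (u : R) - 1 ∣ 1 - ↑(u ^ m) := by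
  cases m with
  | ofNat n => simpa using (sub_one_dvd_pow_sub_one (u : R) n).neg_right
  | negSucc n =>
    have key :
        1 - (↑(u ^ Int.negSucc n) : R) = ↑(u ^ Int.negSucc n) * (↑u ^ (n + 1) - 1) := by
      rw [zpow_negSucc, ← Units.val_pow_eq_pow_val]
      linear_combination -(u ^ (n + 1)).inv_mul
    rw [key]
    exact (sub_one_dvd_pow_sub_one _ _).mul_left _

noncomputable def unitsZPowAut (u : Rˣ) : Multiplicative ℤ →* MulAut (Multiplicative R) :=
  zpowersHom _ (AddEquiv.toMultiplicative (AddAut.mulLeft u))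

namespace unitsZPowAut

open SemidirectProduct

theorem toAdd_apply (u : Rˣ) (m : Multiplicative ℤ) (x : Multiplicative R) :
    (unitsZPowAut u m x).toAdd = ↑(u ^ m.toAdd) * x.toAdd := by
  induction m using Multiplicative.rec with | ofAdd m => ?_
  induction m using Int.induction_on generalizing x with
  | zero => simp [unitsZPowAut]
  | succ k ih =>
    simp only [unitsZPowAut, zpowersHom_apply, toAdd_ofAdd] at ih ⊢
    rw [zpow_add_one, MulAut.mul_apply, ih, zpow_add_one, Units.val_mul, mul_assoc]
    rfl
  | pred k ih =>
    simp only [unitsZPowAut, zpowersHom_apply, toAdd_ofAdd] at ih ⊢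
    rw [zpow_sub_one, MulAut.mul_apply, ih, zpow_sub_one, Units.val_mul, mul_assoc]
    rfl

variable {u : Rˣ}

local notation "Γ" => Multiplicative R ⋊[unitsZPowAut u] Multiplicative ℤ

theorem toAdd_mul_left (g h : Γ) :
    (g * h).left.toAdd = g.left.toAdd + ↑(u ^ g.right.toAdd) * h.left.toAdd := by
  rw [mul_left, toAdd_mul, toAdd_apply]

theorem toAdd_inv_left (g : Γ) :
    (g⁻¹).left.toAdd = -(↑(u ^ (-g.right.toAdd)) * g.left.toAdd) := by
  rw [inv_left, toAdd_apply, toAdd_inv, toAdd_inv, mul_neg]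

theorem toAdd_commutatorElement_left (g h : Γ) :
    ⁅g, h⁆.left.toAdd = (1 - ↑(u ^ h.right.toAdd)) * g.left.toAdd
      + (↑(u ^ g.right.toAdd) - 1) * h.left.toAdd := by
  simp only [commutatorElement_def, toAdd_mul_left, toAdd_inv_left, mul_right, inv_right,
    toAdd_mul, toAdd_inv]
  set a := g.right.toAdd
  set b := h.right.toAdd
  have hab : (↑(u ^ (a + b)) : R) * ↑(u ^ (-a)) = ↑(u ^ b) := by
    rw [← Units.val_mul, ← zpow_add, add_neg_cancel_comm]
  have hb : (↑(u ^ (a + b + -a)) : R) * ↑(u ^ (-b)) = 1 := by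
    rw [← Units.val_mul, ← zpow_add, add_neg_cancel_comm, add_neg_cancel, zpow_zero,
      Units.val_one]
  linear_combination (-g.left.toAdd) * hab - h.left.toAdd * hb

variable (u) in
def subOnePowSubgroup (N : ℕ) : Subgroup Γ where
  carrier := {g | g.right = 1 ∧ ((u : R) - 1) ^ N ∣ g.left.toAdd}
  one_mem' := ⟨rfl, by simp⟩
  mul_mem' := by
    rintro g h ⟨hg, dg⟩ ⟨hh, dh⟩
    refine ⟨by rw [mul_right, hg, hh, one_mul], ?_⟩
    rw [toAdd_mul_left, hg, toAdd_one, zpow_zero, Units.val_one, one_mul]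
    exact dvd_add dg dh
  inv_mem' := by
    rintro g ⟨hg, dg⟩
    refine ⟨by rw [inv_right, hg, inv_one], ?_⟩
    rw [toAdd_inv_left]
    exact (dg.mul_left _).neg_right

theorem commutatorElement_mem_subOnePowSubgroup_one (g h : Γ) :
    ⁅g, h⁆ ∈ subOnePowSubgroup u 1 := by
  refine ⟨commutatorElement_right_eq_one g h, ?_⟩
  rw [toAdd_commutatorElement_left, pow_one, ← neg_sub 1 (↑(u ^ g.right.toAdd) : R), neg_mul]
  exact dvd_add ((u.sub_one_dvd_one_sub_val_zpow _).mul_right _)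
    ((u.sub_one_dvd_one_sub_val_zpow _).mul_right _).neg_right

theorem commutatorElement_mem_subOnePowSubgroup_succ {N : ℕ} {g : Γ}
    (hg : g ∈ subOnePowSubgroup u N) (h : Γ) : ⁅g, h⁆ ∈ subOnePowSubgroup u (N + 1) := by
  obtain ⟨hg, dg⟩ := hg
  refine ⟨commutatorElement_right_eq_one g h, ?_⟩
  rw [toAdd_commutatorElement_left, hg, toAdd_one, zpow_zero, Units.val_one, sub_self, zero_mul,
    add_zero, pow_succ']
  exact mul_dvd_mul (u.sub_one_dvd_one_sub_val_zpow _) dg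

theorem subOnePowSubgroup_succ_le_commutator (N : ℕ) :
    subOnePowSubgroup u (N + 1) ≤ ⁅subOnePowSubgroup u N, ⊤⁆ := by
  rintro g ⟨hg, q, hq⟩
  have hcomm : ⁅(inl (.ofAdd (-(((u : R) - 1) ^ N * q))) : Γ), inr (.ofAdd 1)⁆ = g := by
    refine SemidirectProduct.ext ?_ (by rw [commutatorElement_right_eq_one, hg])
    apply Multiplicative.toAdd.injective
    rw [toAdd_commutatorElement_left, hq]
    simp only [left_inl, right_inl, right_inr, left_inr, toAdd_ofAdd, toAdd_one, zpow_one,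
      zpow_zero, Units.val_one]
    ring
  rw [← hcomm]
  refine Subgroup.commutator_mem_commutator ⟨rfl, ?_⟩ (Subgroup.mem_top _)
  exact (dvd_mul_right _ _).neg_right

theorem lowerCentralSeries_succ_eq_subOnePowSubgroup (N : ℕ) :
    (⊤ : Subgroup Γ).lowerCentralSeries (N + 1) = subOnePowSubgroup u (N + 1) := by
  induction N with
  | zero =>
    refine le_antisymm ?_ ((subOnePowSubgroup_succ_le_commutator 0).trans
      (Subgroup.commutator_mono le_top le_rfl))
    exact Subgroup.commutator_le.mpr fun g _ h _ => commutatorElement_mem_subOnePowSubgroup_one g h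
  | succ N ih =>
    rw [Subgroup.lowerCentralSeries_succ, ih]
    refine le_antisymm ?_ (subOnePowSubgroup_succ_le_commutator _)
    exact Subgroup.commutator_le.mpr fun g hg h _ =>
      commutatorElement_mem_subOnePowSubgroup_succ hg h

theorem mem_lowerCentralSeries_iff {N : ℕ} (hN : 1 ≤ N) (g : Γ) :
    g ∈ (⊤ : Subgroup Γ).lowerCentralSeries N ↔
      g.right = 1 ∧ ((u : R) - 1) ^ N ∣ g.left.toAdd := by
  obtain ⟨N, rfl⟩ := Nat.exists_eq_add_of_le' hN
  rw [lowerCentralSeries_succ_eq_subOnePowSubgroup]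
  rfl

end unitsZPowAut

-- `phi` is `unitsZPowAut` of the unit `T 1` by definition, so `Gamma` is an instance of the above.
/-- For `N ≥ 1`, the `(N+1)`-st term `Z^{N+1}(Γ)` of the lower central series
(`Z^1 = Γ`, `Z^{M+1} = [Z^M, Γ]`; in Mathlib `Z^{N+1}(Γ) = lowerCentralSeries Γ N`)
consists exactly of the pairs `(0, p)` with `p ∈ ℤ[u,u⁻¹]` divisible by `(u-1)^N`. -/
theorem mem_lowerCentralSeries_Gamma_iff (N : ℕ) (hN : 1 ≤ N) (g : Gamma) :
    g ∈ (⊤ : Subgroup Gamma).lowerCentralSeries N ↔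
      (g.right = 1 ∧ ∃ q : LaurentPolynomial ℤ,
        Multiplicative.toAdd g.left = ((T 1 : LaurentPolynomial ℤ) - 1) ^ N * q) :=
  unitsZPowAut.mem_lowerCentralSeries_iff (R := LaurentPolynomial ℤ) (u := (isUnit_T 1).unit) hN g
end

section
/- For every integer N ≥ 1, the quotient group Γ / Z^{N+1}(Γ) is isomorphic to the semidirect product ℤ ⋉ (A/(u−1)^N A), where m ∈ ℤ acts on the quotient ring A/(u−1)^N A by multiplication by the class of u^m. -/
open LaurentPolynomial

/-- The quotient ring `A/(u-1)^N A`. -/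
abbrev Rq (N : ℕ) := LaurentPolynomial ℤ ⧸ Ideal.span {((T 1 : LaurentPolynomial ℤ) - 1) ^ N}

/-- The automorphism of (the multiplicative version of) the additive group `A/(u-1)^N A`
given by multiplication by the class of `u`. -/
noncomputable def sigmaQ (N : ℕ) : MulAut (Multiplicative (Rq N)) :=
  AddEquiv.toMultiplicative
    (AddAut.mulLeft ((isUnit_T (R := ℤ) 1).map
      (Ideal.Quotient.mk (Ideal.span {((T 1 : LaurentPolynomial ℤ) - 1) ^ N}))).unit)

/-- The semidirect product `ℤ ⋉ (A/(u-1)^N A)`, where `m ∈ ℤ` acts by multiplication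
by the class of `u^m`. -/
abbrev GammaQ (N : ℕ) :=
  SemidirectProduct (Multiplicative (Rq N)) (Multiplicative ℤ) (zpowersHom _ (sigmaQ N))

/-!
In `ℤ ⋉_v R` the commutator of `⟨p, m⟩` and `⟨q, n⟩` is `⟨(1 - v^n) p + (v^m - 1) q, 0⟩`.
Since `v - 1` divides every `v^n - 1`, commuting an element `⟨p, 0⟩` with anything multiplies
`p` by an element of `(v - 1) R`, and every `(v - 1) z` arises as the commutator of `⟨-z, 0⟩`
with `⟨0, 1⟩`. By induction the `(N + 1)`-st term of the lower central series is
`(v - 1)^N R × {0}` for `N ≥ 1`, which is the kernel of the surjective reduction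
`ℤ ⋉_v R → ℤ ⋉_v R/(v - 1)^N R`.
-/

open scoped commutatorElement

section
variable {R : Type*} [Ring R] (v : Rˣ)

noncomputable def zpowMulLeft : Multiplicative ℤ →* MulAut (Multiplicative R) :=
  zpowersHom _ (AddEquiv.toMultiplicative (AddAut.mulLeft v))

abbrev UnitSemidirect := Multiplicative R ⋊[zpowMulLeft v] Multiplicative ℤ

theorem zpowMulLeft_apply (m : Multiplicative ℤ) (p : Multiplicative R) :
    zpowMulLeft v m p = Multiplicative.ofAdd (↑(v ^ m.toAdd) * p.toAdd) := by
  rw [zpowMulLeft, zpowersHom_apply]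
  -- on automorphisms `AddEquiv.toMultiplicative` is a group isomorphism, so it commutes with `^`
  show ((MulAutMultiplicative R).symm (AddAut.mulLeft v) ^ m.toAdd) p = _
  rw [← map_zpow, ← map_zpow]
  rfl

theorem UnitSemidirect.commutatorElement_mk (p q : Multiplicative R) (m n : Multiplicative ℤ) :
    ⁅(⟨p, m⟩ : UnitSemidirect v), (⟨q, n⟩ : UnitSemidirect v)⁆ =
      (⟨.ofAdd ((1 - ↑(v ^ n.toAdd)) * p.toAdd + (↑(v ^ m.toAdd) - 1) * q.toAdd), 1⟩ :
        UnitSemidirect v) := by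
  ext
  · simp only [commutatorElement_def, SemidirectProduct.mul_left, SemidirectProduct.inv_left,
      SemidirectProduct.mul_right, SemidirectProduct.inv_right, zpowMulLeft_apply,
      toAdd_mul, toAdd_inv, toAdd_ofAdd, ofAdd_add]
    simp only [← mul_assoc, ← Units.val_mul, ← zpow_add, add_neg_cancel_comm, add_neg_cancel,
      zpow_zero, Units.val_one]
    noncomm_ring
  · simp [commutatorElement_def]
end

namespace UnitSemidirect

variable {R : Type*} [CommRing R] (v : Rˣ)

-- `v ≡ 1` modulo `v - 1`, hence so is every power of `v`.
theorem sub_one_dvd_zpow_sub_one (n : ℤ) : (v : R) - 1 ∣ ↑(v ^ n) - 1 := by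
  set f := (Ideal.Quotient.mk (Ideal.span {(v : R) - 1})).toMonoidHom
  have hv : Units.map f v = 1 :=
    Units.ext (Ideal.Quotient.eq.2 (Ideal.mem_span_singleton_self _))
  rw [← Ideal.mem_span_singleton, ← Ideal.Quotient.eq, map_one]
  have h := congrArg Units.val (map_zpow (Units.map f) v n)
  rwa [hv, one_zpow, Units.coe_map] at h

noncomputable def quotientMap (I : Ideal R) :
    UnitSemidirect v →* UnitSemidirect (Units.map (Ideal.Quotient.mk I : R →* R ⧸ I) v) :=
  SemidirectProduct.map (AddMonoidHom.toMultiplicative (Ideal.Quotient.mk I).toAddMonoidHom)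
    (MonoidHom.id _) fun m ↦ by
      ext p
      simp [zpowMulLeft_apply, ← map_zpow]

theorem quotientMap_surjective (I : Ideal R) : Function.Surjective (quotientMap v I) := by
  rintro ⟨p, m⟩
  obtain ⟨q, rfl⟩ := Ideal.Quotient.mk_surjective p.toAdd
  exact ⟨⟨.ofAdd q, m⟩, rfl⟩

theorem mem_ker_quotientMap {I : Ideal R} {x : UnitSemidirect v} :
    x ∈ (quotientMap v I).ker ↔ x.left.toAdd ∈ I ∧ x.right = 1 := by
  rw [MonoidHom.mem_ker, SemidirectProduct.ext_iff, ← Ideal.Quotient.eq_zero_iff_mem]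
  rfl

theorem commutator_ker_quotientMap_top (J : Ideal R) :
    ⁅(quotientMap v J).ker, ⊤⁆ = (quotientMap v (Ideal.span {(v : R) - 1} * J)).ker := by
  apply le_antisymm
  · rw [Subgroup.commutator_le]
    rintro ⟨p, m⟩ hp ⟨q, n⟩ -
    obtain ⟨hp, rfl⟩ := (mem_ker_quotientMap v).1 hp
    rw [commutatorElement_mk, mem_ker_quotientMap]
    refine ⟨?_, rfl⟩
    simp only [toAdd_one, zpow_zero, Units.val_one, sub_self, zero_mul, add_zero, toAdd_ofAdd]
    exact Ideal.mul_mem_mul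
      (Ideal.mem_span_singleton.2 (dvd_sub_comm.1 (sub_one_dvd_zpow_sub_one v _))) hp
  · intro x hx
    obtain ⟨hx_left, hx_right⟩ := (mem_ker_quotientMap v).1 hx
    obtain ⟨z, hz, hzx⟩ := Ideal.mem_span_singleton_mul.1 hx_left
    have : x = ⁅(⟨.ofAdd (-z), 1⟩ : UnitSemidirect v), ⟨1, .ofAdd 1⟩⁆ := by
      rw [commutatorElement_mk]
      ext
      · simp only [← hzx, toAdd_ofAdd, toAdd_one, zpow_one, zpow_zero, Units.val_one, sub_self,
          mul_zero, add_zero]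
        ring
      · exact hx_right
    rw [this]
    refine Subgroup.commutator_mem_commutator ((mem_ker_quotientMap v).2 ⟨?_, rfl⟩) trivial
    exact J.neg_mem hz

theorem commutator_top_top :
    ⁅(⊤ : Subgroup (UnitSemidirect v)), ⊤⁆ = (quotientMap v (Ideal.span {(v : R) - 1})).ker := by
  apply le_antisymm
  · rw [Subgroup.commutator_le]
    rintro ⟨p, m⟩ - ⟨q, n⟩ -
    rw [commutatorElement_mk, mem_ker_quotientMap]
    refine ⟨Ideal.add_mem _ ?_ ?_, rfl⟩ <;>
      refine Ideal.mul_mem_right _ _ (Ideal.mem_span_singleton.2 ?_)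
    · exact dvd_sub_comm.1 (sub_one_dvd_zpow_sub_one v _)
    · exact sub_one_dvd_zpow_sub_one v _
  · calc (quotientMap v (Ideal.span {(v : R) - 1})).ker
        = ⁅(quotientMap v ⊤).ker, ⊤⁆ := by rw [commutator_ker_quotientMap_top, Ideal.mul_top]
      _ ≤ ⁅⊤, ⊤⁆ := Subgroup.commutator_mono le_top le_rfl

theorem lowerCentralSeries_succ_eq_ker (k : ℕ) :
    (⊤ : Subgroup (UnitSemidirect v)).lowerCentralSeries (k + 1) =
      (quotientMap v (Ideal.span {((v : R) - 1) ^ (k + 1)})).ker := by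
  induction k with
  | zero => rw [zero_add, pow_one]; exact commutator_top_top v
  | succ k ih =>
    rw [Subgroup.lowerCentralSeries_succ, ih, commutator_ker_quotientMap_top,
      Ideal.span_singleton_mul_span_singleton, ← pow_succ']

theorem nonempty_quotient_lowerCentralSeries_mulEquiv {N : ℕ} (hN : 1 ≤ N)
    (w : (R ⧸ Ideal.span {((v : R) - 1) ^ N})ˣ)
    (hw : (w : R ⧸ Ideal.span {((v : R) - 1) ^ N}) = Ideal.Quotient.mk _ ↑v) :
    Nonempty (UnitSemidirect v ⧸ (⊤ : Subgroup (UnitSemidirect v)).lowerCentralSeries N ≃*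
      UnitSemidirect w) := by
  obtain rfl : w = Units.map _ v := Units.ext hw
  obtain ⟨k, rfl⟩ := Nat.exists_eq_add_of_le' hN
  exact ⟨(QuotientGroup.quotientMulEquivOfEq (lowerCentralSeries_succ_eq_ker v k)).trans
    (QuotientGroup.quotientKerEquivOfSurjective _ (quotientMap_surjective v _))⟩

end UnitSemidirect

-- Mathlib indexes the lower central series from `0`: `Z^{N+1}(Γ)` is `lowerCentralSeries ⊤ N`.
/-- For `N ≥ 1`, `Γ / Z^{N+1}(Γ)` is isomorphic to `ℤ ⋉ (A/(u-1)^N A)`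
(in Mathlib `Z^{N+1}(Γ) = lowerCentralSeries Γ N`). -/
theorem quotient_lowerCentralSeries_iso (N : ℕ) (hN : 1 ≤ N) :
    Nonempty ((Gamma ⧸ Subgroup.lowerCentralSeries (⊤ : Subgroup Gamma) N) ≃* GammaQ N) :=
  UnitSemidirect.nonempty_quotient_lowerCentralSeries_mulEquiv _ hN _ rfl
end

section
/- The kernel of the ring homomorphism ℤ[u] → R_N obtained by evaluating integer polynomials at E_1 (the class of the truncated exponential Σ_{m=0}^{N−1} v^m/m!) is exactly the ideal of ℤ[u] generated by (u−1)^N. Moreover, for every k ∈ ℤ the element E_k lies in the additive subgroup of R_N generated by E_0, E_1, …, E_{N−1}. -/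
noncomputable section

/-- The truncation ring `R_N = ℚ[v]/(v^N)`. -/
abbrev RN (N : ℕ) := Polynomial ℚ ⧸ Ideal.span {(Polynomial.X : Polynomial ℚ) ^ N}

/-- `E_k ∈ R_N`: the class of the truncated exponential `∑_{m=0}^{N-1} k^m v^m / m!`. -/
def E (N : ℕ) (k : ℤ) : RN N :=
  Ideal.Quotient.mk _
    (∑ m ∈ Finset.range N, Polynomial.C ((k : ℚ) ^ m / m.factorial) * Polynomial.X ^ m)

/-!
`E_k` is the image of `exp (k X)` under the reduction map `ℚ⟦X⟧ → ℚ[X] ⧸ (X ^ N)`, so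
`E_a E_b = E_{a+b}` and `E_n = u ^ n` for `u = E_1`. Since `exp X - 1` is `X` times a unit,
`u - 1` is `v` times a unit, hence nilpotent of class exactly `N`: the minimal polynomial of `u`
over `ℚ` is `(X - 1) ^ N`. This polynomial is monic with integer coefficients, so divisibility by
it descends from `ℚ[X]` to `ℤ[X]`, which gives the kernel. Division by it writes every element of
`ℤ[u]` as an integer combination of `1, u, …, u ^ (N - 1)`, and `ℤ[u]` contains all `E_k`
because `u⁻¹ = ∑_{i<N} (1 - u) ^ i`.
-/

open Polynomial

theorem minpoly_eq_X_pow_nilpotencyClass {K A : Type*} [Field K] [Ring A] [Algebra K A] {x : A}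
    (hx : IsNilpotent x) : minpoly K x = X ^ nilpotencyClass x := by
  have hx_int : IsIntegral K x :=
    ⟨X ^ nilpotencyClass x, monic_X_pow _, by simp [pow_nilpotencyClass hx]⟩
  obtain ⟨k, hk, hassoc⟩ := (dvd_prime_pow prime_X _).1
    (minpoly.dvd K x (by rw [map_pow, aeval_X, pow_nilpotencyClass hx]))
  have hmin : minpoly K x = X ^ k :=
    eq_of_monic_of_associated (minpoly.monic hx_int) (monic_X_pow k) hassoc
  have hclass : nilpotencyClass x ≤ k := Nat.sInf_le (by simpa [hmin] using minpoly.aeval K x)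
  rw [hmin, le_antisymm hk hclass]

theorem ker_eval₂RingHom_intCast_eq_span {A : Type*} [CommRing A] [Algebra ℚ A] {u : A}
    {q : ℤ[X]} (hq : q.Monic) (hu : minpoly ℚ u = q.map (Int.castRingHom ℚ)) :
    RingHom.ker (eval₂RingHom (Int.castRingHom A) u) = Ideal.span {q} := by
  ext p
  rw [RingHom.mem_ker, Ideal.mem_span_singleton,
    ← map_dvd_map (Int.castRingHom ℚ) (RingHom.injective_int _) hq, ← hu, minpoly.dvd_iff,
    coe_eval₂RingHom, aeval_def, eval₂_map]
  congr!
  exact RingHom.ext_int _ _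

theorem aeval_mem_closure_range_pow {A : Type*} [Ring A] {u : A} {q : ℤ[X]} (hq : q.Monic)
    (hu : aeval u q = 0) (p : ℤ[X]) :
    aeval u p ∈ AddSubgroup.closure (Set.range fun i : Fin q.natDegree => u ^ (i : ℕ)) := by
  rw [← aeval_modByMonic_eq_self_of_root hu]
  obtain hr | hr := eq_or_ne (p %ₘ q) 0
  · rw [hr, map_zero]
    exact zero_mem _
  rw [aeval_eq_sum_range' (natDegree_lt_natDegree hr (degree_modByMonic_lt p hq))]
  refine sum_mem fun i hi => zsmul_mem (AddSubgroup.subset_closure ?_) _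
  exact ⟨⟨i, Finset.mem_range.1 hi⟩, rfl⟩

namespace PowerSeries

variable {R : Type*} [CommRing R]

theorem quotientMk_trunc_coe (N : ℕ) (p : R[X]) :
    Ideal.Quotient.mk (Ideal.span {(Polynomial.X : R[X]) ^ N}) (trunc N (p : PowerSeries R)) =
      Ideal.Quotient.mk _ p := by
  rw [Ideal.Quotient.eq, Ideal.mem_span_singleton, Polynomial.X_pow_dvd_iff]
  intro d hd
  simp [coeff_trunc, hd]

noncomputable def truncQuot (N : ℕ) :
    PowerSeries R →+* R[X] ⧸ Ideal.span {(Polynomial.X : R[X]) ^ N} where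
  toFun f := Ideal.Quotient.mk _ (trunc N f)
  map_one' := by rw [← Polynomial.coe_one, quotientMk_trunc_coe, map_one]
  map_mul' f g := by
    rw [← trunc_trunc_mul_trunc, ← Polynomial.coe_mul, quotientMk_trunc_coe, map_mul]
  map_zero' := by simp
  map_add' f g := by simp

theorem truncQuot_coe (N : ℕ) (p : R[X]) :
    truncQuot N (p : PowerSeries R) = Ideal.Quotient.mk _ p :=
  quotientMk_trunc_coe N p

theorem exp_sub_one_eq_X_mul : exp ℚ - 1 = X * mk fun n => (1 / (n + 1).factorial : ℚ) := by
  ext n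
  cases n <;> simp [coeff_exp, coeff_succ_X_mul]

end PowerSeries

theorem E_eq_truncQuot (N : ℕ) (k : ℤ) :
    E N k = PowerSeries.truncQuot N (PowerSeries.rescale (k : ℚ) (PowerSeries.exp ℚ)) := by
  show _ = Ideal.Quotient.mk _
    (PowerSeries.trunc N (PowerSeries.rescale (k : ℚ) (PowerSeries.exp ℚ)))
  rw [E, PowerSeries.trunc_apply, ← Finset.range_eq_Ico]
  congr 1
  refine Finset.sum_congr rfl fun m _ => ?_
  rw [← C_mul_X_pow_eq_monomial, PowerSeries.coeff_rescale, PowerSeries.coeff_exp]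
  simp [div_eq_mul_inv]

theorem E_add (N : ℕ) (a b : ℤ) : E N (a + b) = E N a * E N b := by
  rw [E_eq_truncQuot, E_eq_truncQuot, E_eq_truncQuot, ← map_mul,
    PowerSeries.exp_mul_exp_eq_exp_add, Int.cast_add]

theorem E_zero (N : ℕ) : E N 0 = 1 := by
  simp [E_eq_truncQuot, PowerSeries.rescale_zero]

theorem E_natCast (N n : ℕ) : E N n = E N 1 ^ n := by
  induction n with
  | zero => simp [E_zero]
  | succ n ih => rw [Nat.cast_succ, E_add, ih, pow_succ]

theorem exists_isUnit_E_one_sub_one_eq_mk_X_mul (N : ℕ) :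
    ∃ w : RN N, IsUnit w ∧ E N 1 - 1 = Ideal.Quotient.mk _ X * w := by
  refine ⟨PowerSeries.truncQuot N (PowerSeries.mk fun n => (1 / (n + 1).factorial : ℚ)),
    IsUnit.map _ ?_, ?_⟩
  · simp [PowerSeries.isUnit_iff_constantCoeff]
  · rw [E_eq_truncQuot, Int.cast_one, PowerSeries.rescale_one, RingHom.id_apply,
      ← map_one (PowerSeries.truncQuot N), ← map_sub, PowerSeries.exp_sub_one_eq_X_mul, map_mul,
      ← Polynomial.coe_X, PowerSeries.truncQuot_coe]

theorem E_one_sub_one_pow (N : ℕ) : (E N 1 - 1) ^ N = 0 := by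
  obtain ⟨w, -, hw⟩ := exists_isUnit_E_one_sub_one_eq_mk_X_mul N
  rw [hw, mul_pow, ← map_pow, Ideal.Quotient.eq_zero_iff_mem.2 (Ideal.mem_span_singleton_self _),
    zero_mul]

theorem nilpotencyClass_E_one_sub_one (N : ℕ) (hN : 1 ≤ N) :
    nilpotencyClass (E N 1 - 1) = N := by
  obtain ⟨n, rfl⟩ := Nat.exists_eq_add_of_le' hN
  refine nilpotencyClass_eq_succ_iff.2 ⟨E_one_sub_one_pow _, ?_⟩
  obtain ⟨w, hw, hsub⟩ := exists_isUnit_E_one_sub_one_eq_mk_X_mul (n + 1)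
  rw [hsub, mul_pow, ne_eq, (hw.pow n).mul_left_eq_zero, ← map_pow,
    Ideal.Quotient.eq_zero_iff_mem, Ideal.mem_span_singleton, X_pow_dvd_iff]
  exact fun h => by simpa using h n n.lt_succ_self

theorem minpoly_E_one (N : ℕ) (hN : 1 ≤ N) : minpoly ℚ (E N 1) = (X - 1) ^ N := by
  have h := minpoly.add_algebraMap (E N 1 - 1) (1 : ℚ)
  rwa [map_one, sub_add_cancel, minpoly_eq_X_pow_nilpotencyClass ⟨N, E_one_sub_one_pow N⟩,
    nilpotencyClass_E_one_sub_one N hN, X_pow_comp, map_one] at h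

theorem E_mem_range_aeval (N : ℕ) (k : ℤ) : E N k ∈ (aeval (R := ℤ) (E N 1)).range := by
  have hgeom : E N 1 * ∑ i ∈ Finset.range N, (1 - E N 1) ^ i = 1 := by
    have h : (1 - E N 1) ^ N = 0 := by
      rw [← neg_sub, neg_pow (E N 1 - 1), E_one_sub_one_pow, mul_zero]
    simpa [h] using mul_neg_geom_sum (1 - E N 1) N
  have hinv : E N (-1) = ∑ i ∈ Finset.range N, (1 - E N 1) ^ i :=
    left_inv_eq_right_inv (by rw [← E_add, neg_add_cancel, E_zero]) hgeom
  induction k using Int.induction_on with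
  | zero => exact E_zero N ▸ one_mem _
  | succ k ih => exact E_add N k 1 ▸ mul_mem ih ⟨X, aeval_X _⟩
  | pred k ih =>
    rw [sub_eq_add_neg, E_add]
    exact mul_mem ih ⟨∑ i ∈ Finset.range N, (1 - X) ^ i, by simp [hinv]⟩

/-- The kernel of the evaluation homomorphism `ℤ[u] → R_N`, `u ↦ E_1`, is the ideal
generated by `(u-1)^N`; moreover every `E_k` (`k ∈ ℤ`) lies in the additive subgroup
of `R_N` generated by `E_0, …, E_{N-1}`. -/
theorem ker_eval_E_one (N : ℕ) (hN : 1 ≤ N) :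
    RingHom.ker (Polynomial.eval₂RingHom (Int.castRingHom (RN N)) (E N 1)) =
      Ideal.span {((Polynomial.X : Polynomial ℤ) - 1) ^ N} ∧
    ∀ k : ℤ, E N k ∈ AddSubgroup.closure (Set.range fun m : Fin N => E N (m : ℕ)) := by
  have hmonic : (((X : ℤ[X]) - 1) ^ N).Monic := by simpa using (monic_X_sub_C (1 : ℤ)).pow N
  have hdeg : (((X : ℤ[X]) - 1) ^ N).natDegree = N := by
    rw [← C_1, natDegree_pow, natDegree_X_sub_C, mul_one]
  refine ⟨ker_eval₂RingHom_intCast_eq_span hmonic (by simp [minpoly_E_one N hN]), fun k => ?_⟩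
  obtain ⟨p, hp⟩ := E_mem_range_aeval N k
  have h := aeval_mem_closure_range_pow (u := E N 1) hmonic (by simp [E_one_sub_one_pow]) p
  rw [hdeg] at h
  simp only [E_natCast]
  exact hp ▸ h
end
end
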